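/- Main theorem, (d) ⇒ (a), monoidal case: Let C be a monoidal category such that the identity functor of C admits a unital magma structure (μ, η), and suppose that for all objects A, B the triangle condition holds: ((ρ_A).inv ⊗ (λ_B).inv) ≫ ((A ◁ η_B) ⊗ (η_A ▷ B)) ≫ μ_{A⊗B} = 𝟙_{A⊗B}. Then C is cocartesian: 𝟙_C is an initial object, and for all A, B the cospan A —ι₁→ A ⊗ B ←ι₂— B, with ι₁ := (ρ_A).inv ≫ (A ◁ η_B) and ι₂ := (λ_B).inv ≫ (η_A ▷ B), is a binary coproduct of A and B; in particular C has all finite coproducts. -/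

import Mathlib

open CategoryTheory CategoryTheory.Limits CategoryTheory.MonoidalCategory

/-- A unital magma structure on the identity functor of a monoidal category: natural
families `μ_A : A ⊗ A ⟶ A` and `η_A : 𝟙_C ⟶ A` satisfying the two unit laws. -/
structure IdMagma (C : Type*) [Category C] [MonoidalCategory C] where
  μ : ∀ A : C, A ⊗ A ⟶ A
  η : ∀ A : C, 𝟙_ C ⟶ A
  μ_natural : ∀ {A B : C} (f : A ⟶ B), (f ⊗ₘ f) ≫ μ B = μ A ≫ f
  η_natural : ∀ {A B : C} (f : A ⟶ B), η A ≫ f = η B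
  left_unit : ∀ A : C, (λ_ A).inv ≫ (η A ▷ A) ≫ μ A = 𝟙 A
  right_unit : ∀ A : C, (ρ_ A).inv ≫ (A ◁ η A) ≫ μ A = 𝟙 A


/-! The triangle condition says that the copairing `(f, g) ↦ (f ⊗ g) ≫ μ` sends the canonical
cospan `(ι₁, ι₂)` to the identity. Together with the naturality of `μ` this makes every map out
of `A ⊗ B` the copairing of its restrictions, while the unit laws give the restrictions of a
copairing, so `A ⊗ B` is a coproduct. For `A = B = 𝟙_C`, comparing `λ` with `μ ≫ η` on the two
injections shows that the idempotent `η_𝟙` is split epi, hence the identity; naturality of `η`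
then makes `η_A` the unique map out of `𝟙_C`. -/

namespace IdMagma

variable {C : Type*} [Category C] [MonoidalCategory C] (m : IdMagma C)

def inl (A B : C) : A ⟶ A ⊗ B := (ρ_ A).inv ≫ (A ◁ m.η B)

def inr (A B : C) : B ⟶ A ⊗ B := (λ_ B).inv ≫ (m.η A ▷ B)

def copair {A B X : C} (f : A ⟶ X) (g : B ⟶ X) : A ⊗ B ⟶ X := (f ⊗ₘ g) ≫ m.μ X

lemma inl_copair {A B X : C} (f : A ⟶ X) (g : B ⟶ X) : m.inl A B ≫ m.copair f g = f := by
  rw [inl, copair, Category.assoc, whiskerLeft_comp_tensorHom_assoc, m.η_natural,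
    MonoidalCategory.tensorHom_def, Category.assoc, ← rightUnitor_inv_naturality_assoc,
    m.right_unit, Category.comp_id]

lemma inr_copair {A B X : C} (f : A ⟶ X) (g : B ⟶ X) : m.inr A B ≫ m.copair f g = g := by
  rw [inr, copair, Category.assoc, whiskerRight_comp_tensorHom_assoc, m.η_natural, tensorHom_def',
    Category.assoc, ← leftUnitor_inv_naturality_assoc, m.left_unit, Category.comp_id]

lemma copair_comp {A B X Y : C} (f : A ⟶ X) (g : B ⟶ X) (t : X ⟶ Y) :
    m.copair f g ≫ t = m.copair (f ≫ t) (g ≫ t) := by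
  simp [copair, ← tensorHom_comp_tensorHom, m.μ_natural]

lemma copair_inl_comp_inr_comp {A B X : C}
    (hAB : m.copair (m.inl A B) (m.inr A B) = 𝟙 (A ⊗ B)) (t : A ⊗ B ⟶ X) :
    m.copair (m.inl A B ≫ t) (m.inr A B ≫ t) = t := by
  rw [← copair_comp, hAB, Category.id_comp]

def isColimitBinaryCofan {A B : C} (hAB : m.copair (m.inl A B) (m.inr A B) = 𝟙 (A ⊗ B)) :
    IsColimit (BinaryCofan.mk (m.inl A B) (m.inr A B)) :=
  BinaryCofan.isColimitMk (fun s => m.copair s.inl s.inr)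
    (fun s => m.inl_copair s.inl s.inr) (fun s => m.inr_copair s.inl s.inr)
    (fun s t ht₁ ht₂ => by rw [← ht₁, ← ht₂, m.copair_inl_comp_inr_comp hAB])

lemma leftUnitor_hom_eq_μ_comp_η
    (h : m.copair (m.inl (𝟙_ C) (𝟙_ C)) (m.inr (𝟙_ C) (𝟙_ C)) = 𝟙 _) :
    (λ_ (𝟙_ C)).hom = m.μ (𝟙_ C) ≫ m.η (𝟙_ C) := by
  have hinl : m.inl (𝟙_ C) (𝟙_ C) ≫ (λ_ (𝟙_ C)).hom =
      m.inl (𝟙_ C) (𝟙_ C) ≫ m.μ (𝟙_ C) ≫ m.η (𝟙_ C) := by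
    rw [inl, Category.assoc, leftUnitor_naturality, unitors_equal, Iso.inv_hom_id_assoc,
      Category.assoc, reassoc_of% (m.right_unit _)]
  have hinr : m.inr (𝟙_ C) (𝟙_ C) ≫ (λ_ (𝟙_ C)).hom =
      m.inr (𝟙_ C) (𝟙_ C) ≫ m.μ (𝟙_ C) ≫ m.η (𝟙_ C) := by
    rw [inr, Category.assoc, unitors_equal, rightUnitor_naturality, ← unitors_equal,
      Iso.inv_hom_id_assoc, Category.assoc, reassoc_of% (m.left_unit _)]
  exact BinaryCofan.IsColimit.hom_ext (m.isColimitBinaryCofan h) hinl hinr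

lemma η_unit_eq_id (h : m.copair (m.inl (𝟙_ C) (𝟙_ C)) (m.inr (𝟙_ C) (𝟙_ C)) = 𝟙 _) :
    m.η (𝟙_ C) = 𝟙 (𝟙_ C) := by
  have hsplit : ((λ_ (𝟙_ C)).inv ≫ m.μ (𝟙_ C)) ≫ m.η (𝟙_ C) = 𝟙 (𝟙_ C) := by
    rw [Category.assoc, ← m.leftUnitor_hom_eq_μ_comp_η h, Iso.inv_hom_id]
  have hidem : m.η (𝟙_ C) ≫ m.η (𝟙_ C) = m.η (𝟙_ C) := m.η_natural _
  calc m.η (𝟙_ C) = (((λ_ (𝟙_ C)).inv ≫ m.μ (𝟙_ C)) ≫ m.η (𝟙_ C)) ≫ m.η (𝟙_ C) := by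
        rw [hsplit, Category.id_comp]
    _ = 𝟙 (𝟙_ C) := by rw [Category.assoc, hidem, hsplit]

def isInitialUnit (h : m.η (𝟙_ C) = 𝟙 (𝟙_ C)) : IsInitial (𝟙_ C) :=
  IsInitial.ofUniqueHom m.η fun A f => by rw [← m.η_natural f, h, Category.id_comp]

end IdMagma

/-- Main theorem, (d) ⇒ (a): if the identity functor admits a unital magma structure
satisfying the triangle condition, then the monoidal category is cocartesian: the unit is
initial, the canonical cospans are binary coproducts, and the category has all finite
coproducts. -/
theorem cocartesian_of_idMagma_triangle {C : Type*} [Category C] [MonoidalCategory C]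
    (m : IdMagma C)
    (h : ∀ A B : C,
      ((ρ_ A).inv ⊗ₘ (λ_ B).inv) ≫ ((A ◁ m.η B) ⊗ₘ (m.η A ▷ B)) ≫ m.μ (A ⊗ B) =
        𝟙 (A ⊗ B)) :
    Nonempty (IsInitial (𝟙_ C)) ∧
    (∀ A B : C, Nonempty (IsColimit (BinaryCofan.mk
        ((ρ_ A).inv ≫ (A ◁ m.η B)) ((λ_ B).inv ≫ (m.η A ▷ B))))) ∧
    HasFiniteCoproducts C := by
  have hcopair (A B : C) : m.copair (m.inl A B) (m.inr A B) = 𝟙 (A ⊗ B) := by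
    rw [IdMagma.copair, IdMagma.inl, IdMagma.inr, ← tensorHom_comp_tensorHom, Category.assoc,
      h A B]
  have hinit := m.isInitialUnit (m.η_unit_eq_id (hcopair _ _))
  have hcolim (A B : C) := m.isColimitBinaryCofan (hcopair A B)
  have : HasInitial C := hinit.hasInitial
  have : HasBinaryCoproducts C :=
    @hasBinaryCoproducts_of_hasColimit_pair C _ fun {A B} => HasColimit.mk ⟨_, hcolim A B⟩
  exact ⟨⟨hinit⟩, fun A B => ⟨hcolim A B⟩, hasFiniteCoproducts_of_has_binary_and_initial⟩
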